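/- arXiv:2305.13987 — 4 statements merged into one kernel-verified Lean document; each statement's English description precedes it below -/
import Mathlib

section
/- Suppose S' ⪰ S (as structural encoding schemes). If the S-SEG-WL test distinguishes two graphs G_1 and G_2 as non-isomorphic after t iterations (i.e., the multisets of node labels at iteration t differ), then the S'-SEG-WL test also distinguishes G_1 and G_2 within t iterations. -/
/-- Canonical label space of the SEG-WL test after `t` iterations: at iteration `0` a label
is a pair (initial label, absolute structural encoding); at iteration `t+1` it is the
multiset of pairs (previous label, relative structural encoding).  Using this canonical
label space is equivalent to using arbitrary injective hash functions `Φ₀`, `Φ`. -/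
def SegLabel (X A C : Type) : ℕ → Type
  | 0 => X × A
  | t + 1 => Multiset (SegLabel X A C t × C)

/-- The canonical SEG-WL test labels: for a graph with initial labels `h0`, absolute
structural encoding `fA` and relative structural encoding `fR` (both already evaluated
on the given graph), `segwl h0 fA fR t v` is the label of vertex `v` after `t` iterations. -/
def segwl {V : Type} {X A C : Type} [Fintype V]
    (h0 : V → X) (fA : V → A) (fR : V → V → C) : (t : ℕ) → V → SegLabel X A C t
  | 0 => fun v => (h0 v, fA v)
  | t + 1 => fun v => Finset.univ.val.map (fun u => (segwl h0 fA fR t u, fR v u))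

/-!
Replacing every encoding inside a label by its image under `pA` or `pR` turns each `S'`-label
into the corresponding `S`-label. So the multiset of `S`-labels of a graph is a function of its
multiset of `S'`-labels, and `S'` already separates the two graphs at iteration `t` itself.
-/

def SegLabel.proj {X A C A' C' : Type} (pA : A' → A) (pR : C' → C) :
    (t : ℕ) → SegLabel X A' C' t → SegLabel X A C t
  | 0, (x, a) => (x, pA a)
  | t + 1, m => m.map fun p => (SegLabel.proj pA pR t p.1, pR p.2)

theorem segwl_comp_eq_proj {V X A C A' C' : Type} [Fintype V]
    (h0 : V → X) (fA' : V → A') (fR' : V → V → C') (pA : A' → A) (pR : C' → C) (t : ℕ) :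
    segwl h0 (pA ∘ fA') (fun v u => pR (fR' v u)) t =
      SegLabel.proj pA pR t ∘ segwl h0 fA' fR' t := by
  induction t with
  | zero => rfl
  | succ t ih =>
    funext v
    rw [Function.comp_apply]
    simp only [segwl, SegLabel.proj, Multiset.map_map, ih]
    rfl

theorem map_segwl_comp_eq_map_proj {V X A C A' C' : Type} [Fintype V]
    (h0 : V → X) (fA' : V → A') (fR' : V → V → C') (pA : A' → A) (pR : C' → C) (t : ℕ) :
    Finset.univ.val.map (segwl h0 (pA ∘ fA') (fun v u => pR (fR' v u)) t) =
      (Finset.univ.val.map (segwl h0 fA' fR' t)).map (SegLabel.proj pA pR t) := by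
  rw [Multiset.map_map, segwl_comp_eq_proj]

theorem segwl_distinguishes_of_refines_general {V₁ V₂ X A C A' C' : Type} [Fintype V₁] [Fintype V₂]
    (h₁ : V₁ → X) (h₂ : V₂ → X)
    (fA₁ : V₁ → A) (fR₁ : V₁ → V₁ → C) (fA₂ : V₂ → A) (fR₂ : V₂ → V₂ → C)
    (fA₁' : V₁ → A') (fR₁' : V₁ → V₁ → C') (fA₂' : V₂ → A') (fR₂' : V₂ → V₂ → C')
    (pA : A' → A) (pR : C' → C)
    (hA₁ : ∀ v, fA₁ v = pA (fA₁' v)) (hR₁ : ∀ v u, fR₁ v u = pR (fR₁' v u))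
    (hA₂ : ∀ v, fA₂ v = pA (fA₂' v)) (hR₂ : ∀ v u, fR₂ v u = pR (fR₂' v u))
    (t : ℕ)
    (hdist : Finset.univ.val.map (segwl h₁ fA₁ fR₁ t) ≠
      Finset.univ.val.map (segwl h₂ fA₂ fR₂ t)) :
    ∃ t' ≤ t, Finset.univ.val.map (segwl h₁ fA₁' fR₁' t') ≠
      Finset.univ.val.map (segwl h₂ fA₂' fR₂' t') := by
  obtain rfl : fA₁ = pA ∘ fA₁' := funext hA₁
  obtain rfl : fA₂ = pA ∘ fA₂' := funext hA₂
  obtain rfl : fR₁ = fun v u => pR (fR₁' v u) := funext₂ hR₁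
  obtain rfl : fR₂ = fun v u => pR (fR₂' v u) := funext₂ hR₂
  refine ⟨t, le_rfl, fun hsame => hdist ?_⟩
  rw [map_segwl_comp_eq_map_proj, map_segwl_comp_eq_map_proj, hsame]

/-- If `S' ⪰ S` and the `S`-SEG-WL test distinguishes graphs `G₁` and `G₂` after `t`
iterations (the multisets of labels differ), then the `S'`-SEG-WL test distinguishes them
within `t` iterations. -/
theorem segwl_distinguishes_of_refines {V₁ V₂ X A C A' C' : Type} [Fintype V₁] [Fintype V₂]
    (G₁ : SimpleGraph V₁) (G₂ : SimpleGraph V₂)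
    (h₁ : V₁ → X) (h₂ : V₂ → X)
    (fA₁ : V₁ → A) (fR₁ : V₁ → V₁ → C) (fA₂ : V₂ → A) (fR₂ : V₂ → V₂ → C)
    (fA₁' : V₁ → A') (fR₁' : V₁ → V₁ → C') (fA₂' : V₂ → A') (fR₂' : V₂ → V₂ → C')
    (pA : A' → A) (pR : C' → C)
    (hA₁ : ∀ v, fA₁ v = pA (fA₁' v)) (hR₁ : ∀ v u, fR₁ v u = pR (fR₁' v u))
    (hA₂ : ∀ v, fA₂ v = pA (fA₂' v)) (hR₂ : ∀ v u, fR₂ v u = pR (fR₂' v u))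
    (t : ℕ)
    (hdist : Finset.univ.val.map (segwl h₁ fA₁ fR₁ t) ≠
      Finset.univ.val.map (segwl h₂ fA₂ fR₂ t)) :
    ∃ t' ≤ t, Finset.univ.val.map (segwl h₁ fA₁' fR₁' t') ≠
      Finset.univ.val.map (segwl h₂ fA₂' fR₂' t') :=
  segwl_distinguishes_of_refines_general h₁ h₂ fA₁ fR₁ fA₂ fR₂ fA₁' fR₁' fA₂' fR₂' pA pR hA₁ hR₁ hA₂
    hR₂ t hdist
end

section
/- Let Neighbor_R be the relative encoding with Neighbor_R(v,v)=0, Neighbor_R(v,u)=1 if v,u adjacent, and 2 otherwise. If the Neighbor-SEG-WL test assigns two vertices the same label at iteration t, then the WL test (1-WL color refinement) also assigns them the same label at iteration t. -/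
/-- Canonical label space of the 1-WL test after `t` iterations. -/
def WLLabel (X : Type) : ℕ → Type
  | 0 => X
  | t + 1 => WLLabel X t × Multiset (WLLabel X t)

/-- The canonical 1-WL (color refinement) labels: `wl G h0 t v` is the label of `v` after
`t` iterations, updated as `w_t(v) = (w_{t-1}(v), {{w_{t-1}(u) : u ∈ N(v)}})`. -/
def wl {V X : Type} [Fintype V] (G : SimpleGraph V) [DecidableRel G.Adj]
    (h0 : V → X) : (t : ℕ) → V → WLLabel X t
  | 0 => h0
  | t + 1 => fun v => (wl G h0 t v, (G.neighborFinset v).val.map (wl G h0 t))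

/-- The `Neighbor` relative structural encoding: `0` on the diagonal, `1` for adjacent
pairs and `2` for distinct non-adjacent pairs. -/
def neighborR {V : Type} [DecidableEq V] (G : SimpleGraph V) [DecidableRel G.Adj]
    (v u : V) : ℕ :=
  if v = u then 0 else if G.Adj v u then 1 else 2

/-! The `Neighbor` encoding splits the SEG-WL multiset of `v` into three fibres: value `0` holds
only `v` itself and value `1` exactly the neighbours of `v`. Reading off these two fibres
recovers both components of the WL update, so by induction equal SEG-WL labels give equal
WL labels. -/

theorem Multiset.map_eq_map_of_map_eq {α β γ δ : Type*} {f : α → γ} {f' : β → γ}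
    {g : α → δ} {g' : β → δ} (H : ∀ a b, f a = f' b → g a = g' b)
    {s : Multiset α} {t : Multiset β} (h : s.map f = t.map f') : s.map g = t.map g' := by
  rw [← Multiset.rel_eq, Multiset.rel_map] at h ⊢
  exact h.mono fun a _ b _ => H a b

section SegWL

variable {V X A C : Type} [Fintype V] [DecidableEq C]

theorem segwl_succ_filter_map_fst (h0 : V → X) (fA : V → A) (fR : V → V → C)
    (t : ℕ) (v : V) (c : C) :
    ((segwl h0 fA fR (t + 1) v).filter (·.2 = c)).map Prod.fst =
      (Finset.univ.filter (fR v · = c)).val.map (segwl h0 fA fR t) := by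
  simp only [segwl, Multiset.filter_map, Multiset.map_map, Finset.filter_val]
  rfl

theorem segwl_fiber_eq_of_segwl_succ_eq {W : Type} [Fintype W]
    {h₁ : V → X} {h₂ : W → X} {fA₁ : V → A} {fA₂ : W → A}
    {fR₁ : V → V → C} {fR₂ : W → W → C} {t : ℕ} {v : V} {w : W}
    (h : segwl h₁ fA₁ fR₁ (t + 1) v = segwl h₂ fA₂ fR₂ (t + 1) w) (c : C) :
    (Finset.univ.filter (fR₁ v · = c)).val.map (segwl h₁ fA₁ fR₁ t) =
      (Finset.univ.filter (fR₂ w · = c)).val.map (segwl h₂ fA₂ fR₂ t) := by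
  rw [← segwl_succ_filter_map_fst, ← segwl_succ_filter_map_fst, h]

end SegWL

section NeighborR

variable {V : Type} [Fintype V] [DecidableEq V] (G : SimpleGraph V) [DecidableRel G.Adj]

theorem filter_neighborR_eq_zero (v : V) :
    Finset.univ.filter (neighborR G v · = 0) = {v} := by
  ext u
  simp only [Finset.mem_filter, Finset.mem_univ, true_and, Finset.mem_singleton]
  unfold neighborR
  split_ifs <;> simp_all [eq_comm]

theorem filter_neighborR_eq_one (v : V) :
    Finset.univ.filter (neighborR G v · = 1) = G.neighborFinset v := by
  ext u
  simp only [Finset.mem_filter, Finset.mem_univ, true_and, SimpleGraph.mem_neighborFinset]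
  unfold neighborR
  split_ifs <;> simp_all

end NeighborR

theorem wl_eq_of_segwl_neighborR_eq {V₁ V₂ X A : Type} [Fintype V₁] [Fintype V₂]
    [DecidableEq V₁] [DecidableEq V₂] (G₁ : SimpleGraph V₁) (G₂ : SimpleGraph V₂)
    [DecidableRel G₁.Adj] [DecidableRel G₂.Adj] (h₁ : V₁ → X) (h₂ : V₂ → X)
    (fA₁ : V₁ → A) (fA₂ : V₂ → A) (t : ℕ) (v : V₁) (u : V₂)
    (h : segwl h₁ fA₁ (neighborR G₁) t v = segwl h₂ fA₂ (neighborR G₂) t u) :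
    wl G₁ h₁ t v = wl G₂ h₂ t u := by
  induction t generalizing v u with
  | zero => exact congrArg Prod.fst h
  | succ t ih =>
    have hself := segwl_fiber_eq_of_segwl_succ_eq h 0
    rw [filter_neighborR_eq_zero, filter_neighborR_eq_zero] at hself
    have hnbr := segwl_fiber_eq_of_segwl_succ_eq h 1
    rw [filter_neighborR_eq_one, filter_neighborR_eq_one] at hnbr
    change (wl G₁ h₁ t v, (G₁.neighborFinset v).val.map (wl G₁ h₁ t)) =
      (wl G₂ h₂ t u, (G₂.neighborFinset u).val.map (wl G₂ h₂ t))
    rw [ih v u (Multiset.singleton_inj.mp hself),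
      Multiset.map_eq_map_of_map_eq ih hnbr]

/-- If the `Neighbor`-SEG-WL test assigns vertices `v` (of `G₁`) and `u` (of `G₂`) the
same label at iteration `t` (starting from initial labels `h₁`, `h₂`), then the WL test
also assigns them the same label at iteration `t`. -/
theorem wl_eq_of_neighbor_segwl_eq {V₁ V₂ X : Type} [Fintype V₁] [Fintype V₂]
    [DecidableEq V₁] [DecidableEq V₂]
    (G₁ : SimpleGraph V₁) (G₂ : SimpleGraph V₂)
    [DecidableRel G₁.Adj] [DecidableRel G₂.Adj]
    (h₁ : V₁ → X) (h₂ : V₂ → X) (t : ℕ) (v : V₁) (u : V₂)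
    (h : segwl h₁ (fun _ => PUnit.unit) (neighborR G₁) t v =
         segwl h₂ (fun _ => PUnit.unit) (neighborR G₂) t u) :
    wl G₁ h₁ t v = wl G₂ h₂ t u :=
  wl_eq_of_segwl_neighborR_eq G₁ G₂ h₁ h₂ _ _ t v u h
end

section
/- In a cycle graph C_l, for any two distinct non-adjacent vertices v, u with dist(v,u) < l/2, the shortest path between v and u is unique, and the vertex set of SPIS(v,u) has exactly dist(v,u)+1 vertices. -/
/-!
On `C_l` the distance from `v` to `u` is the length of the shorter of the two arcs joining them,
`min ((u - v) mod l) ((v - u) mod l)`. If this is less than `l / 2`, then at every vertex of a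
shortest walk exactly one neighbour is closer to `u`, so the shortest walk is unique. A vertex lies
in `SPIS(v, u)` iff it lies on some shortest walk, so `SPIS(v, u)` is the vertex set of that unique
path, which has `dist(v, u) + 1` vertices.
-/

open SimpleGraph

/-- The vertex set of the shortest path induced subgraph `SPIS(v, u)`. -/
noncomputable def spisSet {V : Type*} (G : SimpleGraph V) (v u : V) : Set V :=
  {s | G.edist v s + G.edist s u = G.edist v u}

namespace SimpleGraph

variable {V : Type*} {G : SimpleGraph V} {v u s : V}

lemma mem_spisSet_iff (h : G.Reachable v u) :
    s ∈ spisSet G v u ↔ ∃ p : G.Walk v u, p.length = G.dist v u ∧ s ∈ p.support := by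
  change G.edist v s + G.edist s u = G.edist v u ↔ _
  rw [← h.coe_dist_eq_edist]
  constructor
  · intro hs
    have hvs : G.edist v s ≠ ⊤ := fun h ↦ by simp [h] at hs
    have hsu : G.edist s u ≠ ⊤ := fun h ↦ by simp [h] at hs
    obtain ⟨q, hq⟩ := (reachable_of_edist_ne_top hvs).exists_walk_length_eq_edist
    obtain ⟨r, hr⟩ := (reachable_of_edist_ne_top hsu).exists_walk_length_eq_edist
    have hqr : ((q.append r).length : ℕ∞) = G.dist v u := by
      rw [Walk.length_append, Nat.cast_add, hq, hr, hs]
    exact ⟨q.append r, mod_cast hqr, Walk.mem_support_iff_exists_append.mpr ⟨q, r, rfl⟩⟩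
  · rintro ⟨p, hp, hs⟩
    obtain ⟨q, r, rfl⟩ := Walk.mem_support_iff_exists_append.mp hs
    refine le_antisymm ?_ ?_
    · calc G.edist v s + G.edist s u ≤ q.length + r.length :=
          add_le_add (edist_le q) (edist_le r)
        _ = G.dist v u := by rw [← hp, Walk.length_append, Nat.cast_add]
    · rw [h.coe_dist_eq_edist]
      exact G.edist_triangle

lemma spisSet_eq_support (p : G.Walk v u) (hp : p.length = G.dist v u)
    (huniq : ∀ q : G.Walk v u, q.length = G.dist v u → q = p) :
    spisSet G v u = {s | s ∈ p.support} := by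
  ext s
  rw [mem_spisSet_iff p.reachable]
  constructor
  · rintro ⟨q, hq, hs⟩
    exact huniq q hq ▸ hs
  · exact fun hs ↦ ⟨p, hp, hs⟩

lemma Walk.IsPath.ncard_support {p : G.Walk v u} (hp : p.IsPath) :
    {s | s ∈ p.support}.ncard = p.length + 1 := by
  classical
  rw [← p.length_support, ← List.toFinset_card_of_nodup hp.support_nodup,
    ← Set.ncard_coe_finset]
  simp

end SimpleGraph

def cycleNorm {n : ℕ} (x : Fin (n + 1)) : ℕ := min x.val (-x).val

section cycleNorm

variable {n : ℕ}

lemma cycleNorm_eq (x : Fin (n + 1)) : cycleNorm x = min x.val (n + 1 - x.val) := by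
  rw [cycleNorm, Fin.val_neg]
  split_ifs with h
  · simp [h]
  · rfl

lemma Fin.val_add_one_cases (x : Fin (n + 1)) :
    x.val = n ∧ (x + 1).val = 0 ∨ x.val < n ∧ (x + 1).val = x.val + 1 := by
  rw [Fin.val_add_one]
  split_ifs with h <;> rw [Fin.ext_iff, Fin.val_last] at h <;> omega

lemma Fin.val_sub_one_cases (x : Fin (n + 1)) :
    x.val = 0 ∧ (x - 1).val = n ∨ 0 < x.val ∧ (x - 1).val = x.val - 1 := by
  rw [Fin.coe_sub_one]
  split_ifs with h <;> rw [Fin.ext_iff, Fin.val_zero] at h <;> omega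

lemma cycleNorm_add_one_le (x : Fin (n + 1)) : cycleNorm (x + 1) ≤ cycleNorm x + 1 := by
  rw [cycleNorm_eq, cycleNorm_eq]
  have := Fin.val_add_one_cases x
  omega

lemma cycleNorm_sub_one_le (x : Fin (n + 1)) : cycleNorm (x - 1) ≤ cycleNorm x + 1 := by
  rw [cycleNorm_eq, cycleNorm_eq]
  have := Fin.val_sub_one_cases x
  omega

lemma not_cycleNorm_sub_one_lt_and_add_one_lt {x : Fin (n + 1)} (h : 2 * cycleNorm x < n + 1) :
    ¬(cycleNorm (x - 1) < cycleNorm x ∧ cycleNorm (x + 1) < cycleNorm x) := by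
  rw [cycleNorm_eq, cycleNorm_eq, cycleNorm_eq] at *
  have := Fin.val_add_one_cases x
  have := Fin.val_sub_one_cases x
  omega

end cycleNorm

namespace SimpleGraph

variable {n : ℕ}

lemma cycleGraph_adj_iff {v z : Fin (n + 2)} :
    (cycleGraph (n + 2)).Adj v z ↔ z = v - 1 ∨ z = v + 1 := by
  rw [cycleGraph_adj, sub_eq_iff_eq_add', sub_eq_iff_eq_add', eq_sub_iff_add_eq, eq_comm (a := v)]

lemma cycleGraph_adj_add_one (v : Fin (n + 2)) : (cycleGraph (n + 2)).Adj v (v + 1) :=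
  cycleGraph_adj_iff.mpr (.inr rfl)

lemma exists_walk_cycleGraph_length_eq_val (v u : Fin (n + 2)) :
    ∃ p : (cycleGraph (n + 2)).Walk v u, p.length = (u - v).val := by
  induction h : (u - v).val generalizing v with
  | zero =>
    obtain rfl : v = u := (sub_eq_zero.mp (Fin.ext h)).symm
    exact ⟨.nil, rfl⟩
  | succ k ih =>
    have hk : (u - (v + 1)).val = k := by
      rw [sub_add_eq_sub_sub]
      have := Fin.val_sub_one_cases (u - v)
      omega
    obtain ⟨p, hp⟩ := ih (v + 1) hk
    exact ⟨.cons (cycleGraph_adj_add_one v) p, by rw [Walk.length_cons, hp]⟩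

lemma cycleNorm_sub_le_length {v u : Fin (n + 2)} (p : (cycleGraph (n + 2)).Walk v u) :
    cycleNorm (u - v) ≤ p.length := by
  induction p with
  | nil => simp [cycleNorm]
  | @cons v z u h p ih =>
    rw [Walk.length_cons]
    rcases cycleGraph_adj_iff.mp h with rfl | rfl
    · calc cycleNorm (u - v) = cycleNorm (u - (v - 1) - 1) := by rw [sub_sub, sub_add_cancel]
        _ ≤ p.length + 1 := (cycleNorm_sub_one_le _).trans (by omega)
    · calc cycleNorm (u - v) = cycleNorm (u - (v + 1) + 1) := by
            rw [sub_add_eq_sub_sub, sub_add_cancel]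
        _ ≤ p.length + 1 := (cycleNorm_add_one_le _).trans (by omega)

lemma dist_cycleGraph (v u : Fin (n + 2)) :
    (cycleGraph (n + 2)).dist v u = cycleNorm (u - v) := by
  refine le_antisymm ?_ ?_
  · obtain ⟨p, hp⟩ := exists_walk_cycleGraph_length_eq_val v u
    obtain ⟨q, hq⟩ := exists_walk_cycleGraph_length_eq_val u v
    rw [cycleNorm, le_min_iff, neg_sub, ← hp, ← hq]
    exact ⟨dist_le p, dist_comm (G := cycleGraph _) ▸ dist_le q⟩
  · obtain ⟨p, hp⟩ := cycleGraph_connected.exists_walk_length_eq_dist v u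
    exact hp ▸ cycleNorm_sub_le_length p

lemma cycleGraph_eq_of_adj_of_dist_lt {v u z z' : Fin (n + 2)}
    (h : 2 * (cycleGraph (n + 2)).dist v u < n + 2)
    (hz : (cycleGraph (n + 2)).Adj v z) (hz' : (cycleGraph (n + 2)).Adj v z')
    (hzu : (cycleGraph (n + 2)).dist z u < (cycleGraph (n + 2)).dist v u)
    (hz'u : (cycleGraph (n + 2)).dist z' u < (cycleGraph (n + 2)).dist v u) : z = z' := by
  have hsub : u - (v - 1) = u - v + 1 := by abel
  have hadd : u - (v + 1) = u - v - 1 := by abel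
  have hdescent := not_cycleNorm_sub_one_lt_and_add_one_lt (x := u - v)
  simp only [dist_cycleGraph] at h hzu hz'u
  rcases cycleGraph_adj_iff.mp hz with rfl | rfl <;>
    rcases cycleGraph_adj_iff.mp hz' with rfl | rfl
  · rfl
  · rw [hsub] at hzu
    rw [hadd] at hz'u
    exact absurd ⟨hz'u, hzu⟩ (hdescent h)
  · rw [hadd] at hzu
    rw [hsub] at hz'u
    exact absurd ⟨hzu, hz'u⟩ (hdescent h)
  · rfl

lemma cycleGraph_walk_eq_of_length_eq_dist {v u : Fin (n + 2)}
    {p q : (cycleGraph (n + 2)).Walk v u}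
    (h : 2 * (cycleGraph (n + 2)).dist v u < n + 2)
    (hp : p.length = (cycleGraph (n + 2)).dist v u)
    (hq : q.length = (cycleGraph (n + 2)).dist v u) : p = q := by
  induction p with
  | nil =>
    rw [dist_self] at hq
    exact (Walk.eq_nil_iff_nil.mpr (Walk.length_eq_zero_iff.mp hq)).symm
  | @cons v z u hz p ih =>
    cases q with
    | nil => simp at hp
    | @cons _ z' _ hz' q =>
      have hpz := length_eq_dist_of_subwalk hp (Walk.isSubwalk_cons p hz)
      have hqz := length_eq_dist_of_subwalk hq (Walk.isSubwalk_cons q hz')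
      rw [Walk.length_cons] at hp hq
      obtain rfl : z = z' := cycleGraph_eq_of_adj_of_dist_lt h hz hz' (by omega) (by omega)
      rw [ih (by omega) hpz hqz]

end SimpleGraph

theorem cycle_spis_card_general {l : ℕ} (hl : 5 ≤ l) (v u : Fin l)
    (hdist : 2 * (cycleGraph l).dist v u < l) :
    (∃! p : (cycleGraph l).Walk v u, p.IsPath ∧ p.length = (cycleGraph l).dist v u) ∧
    (spisSet (cycleGraph l) v u).ncard = (cycleGraph l).dist v u + 1 := by
  obtain ⟨n, rfl⟩ : ∃ n, l = n + 2 := ⟨l - 2, by omega⟩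
  have huniq : ∀ p q : (cycleGraph (n + 2)).Walk v u, p.length = (cycleGraph (n + 2)).dist v u →
      q.length = (cycleGraph (n + 2)).dist v u → p = q :=
    fun _ _ hp hq ↦ cycleGraph_walk_eq_of_length_eq_dist hdist hp hq
  obtain ⟨p, hpath, hp⟩ := cycleGraph_connected.exists_path_of_dist v u
  refine ⟨⟨p, ⟨hpath, hp⟩, fun q hq ↦ huniq q p hq.2 hp⟩, ?_⟩
  rw [spisSet_eq_support p hp (huniq · p · hp), hpath.ncard_support, hp]

/-- In a cycle `C_l` (`l ≥ 5`), for any two distinct non-adjacent vertices `v, u` with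
`dist(v,u) < l/2`, the shortest path between `v` and `u` is unique, and the vertex set of
`SPIS(v,u)` has exactly `dist(v,u) + 1` vertices. -/
theorem cycle_spis_card {l : ℕ} (hl : 5 ≤ l) (v u : Fin l)
    (hne : v ≠ u) (hadj : ¬(cycleGraph l).Adj v u)
    (hdist : 2 * (cycleGraph l).dist v u < l) :
    (∃! p : (cycleGraph l).Walk v u, p.IsPath ∧ p.length = (cycleGraph l).dist v u) ∧
    (spisSet (cycleGraph l) v u).ncard = (cycleGraph l).dist v u + 1 :=
  cycle_spis_card_general hl v u hdist
end

section
/- For any vertex s in V_SPIS(v,u), the distance from v to s computed within the induced subgraph SPIS(v,u) equals the distance from v to s in the whole graph G. -/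
/-! A shortest walk from `v` to `s` passes only through vertices `x` with
`d(v, x) + d(x, s) = d(v, s)`. When `s` itself lies on a shortest `v`–`u` route, every such `x`
does too, by the triangle inequality through `s`. So a shortest `v`–`s` walk of `G` lies inside
`SPIS(v, u)` and lifts to the induced subgraph; conversely, walks of the induced subgraph are
walks of `G`. When `s` is unreachable from `v`, both distances take the junk value `0`. -/

namespace SimpleGraph

variable {V : Type*} {G : SimpleGraph V}

theorem Hom.edist_le {W : Type*} {H : SimpleGraph W} (f : G →g H) (a b : V) :
    H.edist (f a) (f b) ≤ G.edist a b :=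
  le_sInf <| by
    rintro _ ⟨p, rfl⟩
    exact (SimpleGraph.edist_le (p.map f)).trans_eq (by rw [Walk.length_map])

theorem edist_le_edist_induce (s : Set V) (a b : s) : G.edist a b ≤ (G.induce s).edist a b :=
  (Embedding.induce s).toHom.edist_le a b

theorem edist_induce_of_support_subset {s : Set V} {a b : s} (p : G.Walk a b)
    (hp : p.length = G.edist a b) (hps : ∀ x ∈ p.support, x ∈ s) :
    (G.induce s).edist a b = G.edist a b := by
  refine le_antisymm ?_ (edist_le_edist_induce s a b)
  calc (G.induce s).edist a b ≤ (p.induce s hps).length := edist_le _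
    _ = G.edist a b := by
      rw [← hp, ← Walk.length_map (Embedding.induce s).toHom, Walk.map_induce]; rfl

theorem Walk.edist_add_edist_eq_of_mem_support {a b x : V} (p : G.Walk a b)
    (hp : p.length = G.edist a b) (hx : x ∈ p.support) :
    G.edist a x + G.edist x b = G.edist a b := by
  obtain ⟨q, r, rfl⟩ := p.mem_support_iff_exists_append.mp hx
  refine le_antisymm ?_ G.edist_triangle
  calc G.edist a x + G.edist x b ≤ q.length + r.length := add_le_add (edist_le q) (edist_le r)
    _ = G.edist a b := by rw [← hp, Walk.length_append, Nat.cast_add]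

theorem spisSet_subset_spisSet {v u s : V} (hs : s ∈ spisSet G v u) :
    spisSet G v s ⊆ spisSet G v u := by
  intro x hx
  refine le_antisymm ?_ G.edist_triangle
  calc G.edist v x + G.edist x u ≤ G.edist v x + (G.edist x s + G.edist s u) :=
        add_le_add le_rfl G.edist_triangle
    _ = G.edist v u := by rw [← add_assoc, hx, hs]

theorem edist_induce_spisSet {v u s : V} (hv : v ∈ spisSet G v u) (hs : s ∈ spisSet G v u) :
    (G.induce (spisSet G v u)).edist ⟨v, hv⟩ ⟨s, hs⟩ = G.edist v s := by
  by_cases hreach : G.Reachable v s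
  · obtain ⟨p, hp⟩ := hreach.exists_walk_length_eq_edist
    exact edist_induce_of_support_subset (a := ⟨v, hv⟩) (b := ⟨s, hs⟩) p hp fun x hx =>
      spisSet_subset_spisSet hs (p.edist_add_edist_eq_of_mem_support hp hx)
  · have hle := edist_le_edist_induce (G := G) (spisSet G v u) ⟨v, hv⟩ ⟨s, hs⟩
    rw [edist_eq_top_of_not_reachable hreach, top_le_iff] at hle
    rw [hle, edist_eq_top_of_not_reachable hreach]

end SimpleGraph

theorem spis_dist_eq_general {V : Type*} (G : SimpleGraph V) (v u : V)
    (s : V)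
    (hv : v ∈ spisSet G v u) (hs : s ∈ spisSet G v u) :
    (G.induce (spisSet G v u)).dist ⟨v, hv⟩ ⟨s, hs⟩ = G.dist v s :=
  congrArg ENat.toNat (SimpleGraph.edist_induce_spisSet hv hs)

/-- For any vertex `s` of `SPIS(v,u)`, the distance from `v` to `s` computed inside the
induced subgraph `SPIS(v,u)` equals the distance from `v` to `s` in `G`. -/
theorem spis_dist_eq {V : Type*} (G : SimpleGraph V) (v u : V)
    (hreach : G.Reachable v u) (s : V)
    (hv : v ∈ spisSet G v u) (hs : s ∈ spisSet G v u) :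
    (G.induce (spisSet G v u)).dist ⟨v, hv⟩ ⟨s, hs⟩ = G.dist v s :=
  spis_dist_eq_general G v u s hv hs
end
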